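/- Let (Ω,P) be a measure space with σ-finite measure P, let p, q be probability densities w.r.t. P, let ε ∈ (0,1/2), let K̄ be a positive integer, and let a < b be reals with r = ½(b − a). Denote by p^{K̄}, q^{K̄} the K̄-fold product densities on Ω^{K̄} w.r.t. P^{K̄}. If there exists a Borel function ĝ : Ω^{K̄} → ℝ such that the q^{K̄}-probability of {|ĝ(ω^{K̄}) − b| ≥ r} is at most ε and the p^{K̄}-probability of {|ĝ(ω^{K̄}) − a| ≥ r} is at most ε, then (∫_Ω √(p(ω) q(ω)) P(dω))^{K̄} ≤ 2 √(ε(1−ε)). -/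

import Mathlib

/-!
The Hellinger affinity `∫ √(p q) dP` tensorizes: its `K`-th power is the affinity of the
product densities. For any event `S`, Cauchy–Schwarz on `S` and on `Sᶜ` bounds the affinity of
two probability measures `μ, ν` by `√(μ S · ν S) + √(μ Sᶜ · ν Sᶜ)`. Let `μ, ν` be the laws of
the sample under `p` and `q` and take `S = {|ĝ - a| ≥ r}`: then `μ S ≤ ε`, and `ν Sᶜ ≤ ε`
because off `S` the estimate lies within `r` of `a`, hence at distance at least `r` from
`b = a + 2r`. For `x ≤ ε` and `y ≥ 1 - ε` with `ε ≤ 1/2`, the two-point affinity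
`√(x y) + √((1 - x)(1 - y))` is at most `2 √(ε (1 - ε))`.
-/

open MeasureTheory

/-- The distribution of `K` i.i.d. observations drawn from the distribution with density
`f` w.r.t. `P`: the `K`-fold product measure `P^K` weighted by the product density. -/
noncomputable def prodDensityMeasure {Ω : Type*} [MeasurableSpace Ω] (P : Measure Ω)
    (K : ℕ) (f : Ω → ℝ) : Measure (Fin K → Ω) :=
  (Measure.pi fun _ : Fin K => P).withDensity fun y => ENNReal.ofReal (∏ k, f (y k))

open scoped ENNReal

lemma Real.sqrt_mul_add_sqrt_one_sub_mul_one_sub_le {ε x y : ℝ} (hε : ε ≤ 1 / 2)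
    (hx0 : 0 ≤ x) (hx : x ≤ ε) (hy : 1 - ε ≤ y) (hy1 : y ≤ 1) :
    √(x * y) + √((1 - x) * (1 - y)) ≤ 2 * √(ε * (1 - ε)) := by
  set s := √(x * y)
  set t := √((1 - x) * (1 - y))
  set u := √(ε * (1 - ε))
  have hs : s ^ 2 = x * y := Real.sq_sqrt (by nlinarith)
  have ht : t ^ 2 = (1 - x) * (1 - y) := Real.sq_sqrt (by nlinarith)
  have hu : u ^ 2 = ε * (1 - ε) := Real.sq_sqrt (by nlinarith)
  have hst : s * t ≤ u ^ 2 := by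
    rw [← Real.sqrt_mul (by nlinarith), hu]
    refine Real.sqrt_le_iff.mpr ⟨by nlinarith, ?_⟩
    -- `z ↦ z (1 - z)` decreases with the distance of `z` from `1/2`
    have hx' : x * (1 - x) ≤ ε * (1 - ε) := by nlinarith
    have hy' : y * (1 - y) ≤ ε * (1 - ε) := by nlinarith
    calc x * y * ((1 - x) * (1 - y)) = x * (1 - x) * (y * (1 - y)) := by ring
      _ ≤ ε * (1 - ε) * (ε * (1 - ε)) := mul_le_mul hx' hy' (by nlinarith) (by nlinarith)
      _ = (ε * (1 - ε)) ^ 2 := by ring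
  have hsum : s ^ 2 + t ^ 2 ≤ 2 * u ^ 2 := by
    rw [hs, ht, hu]
    nlinarith [mul_nonneg (sub_nonneg.mpr hx) (sub_nonneg.mpr hy)]
  nlinarith [sq_nonneg (s + t - 2 * u), Real.sqrt_nonneg (x * y),
    Real.sqrt_nonneg ((1 - x) * (1 - y)), Real.sqrt_nonneg (ε * (1 - ε))]

namespace MeasureTheory

section Affinity

variable {α : Type*} [MeasurableSpace α] {μ : Measure α} {f g : α → ℝ≥0∞} {s : Set α}

lemma setLIntegral_rpow_half_mul_le (hf : AEMeasurable f μ) (hg : AEMeasurable g μ)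
    (hs : MeasurableSet s) :
    ∫⁻ a in s, (f a * g a) ^ (1 / 2 : ℝ) ∂μ
      ≤ (μ.withDensity f s * μ.withDensity g s) ^ (1 / 2 : ℝ) := by
  have hsq : ∀ x : ℝ≥0∞, (x ^ (1 / 2 : ℝ)) ^ (2 : ℝ) = x := fun x => by
    rw [← ENNReal.rpow_mul]; norm_num
  rw [withDensity_apply _ hs, withDensity_apply _ hs,
    ENNReal.mul_rpow_of_nonneg _ _ (by norm_num)]
  simp_rw [ENNReal.mul_rpow_of_nonneg _ _ (show (0 : ℝ) ≤ 1 / 2 by norm_num)]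
  simpa only [hsq, Pi.mul_apply] using ENNReal.lintegral_mul_le_Lp_mul_Lq (μ.restrict s)
    Real.HolderConjugate.two_two (hf.restrict.pow_const (1 / 2 : ℝ))
    (hg.restrict.pow_const (1 / 2 : ℝ))

lemma lintegral_rpow_half_mul_le_add_compl (hf : AEMeasurable f μ) (hg : AEMeasurable g μ)
    (hs : MeasurableSet s) :
    ∫⁻ a, (f a * g a) ^ (1 / 2 : ℝ) ∂μ
      ≤ (μ.withDensity f s * μ.withDensity g s) ^ (1 / 2 : ℝ)
        + (μ.withDensity f sᶜ * μ.withDensity g sᶜ) ^ (1 / 2 : ℝ) := by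
  rw [← lintegral_add_compl _ hs]
  exact add_le_add (setLIntegral_rpow_half_mul_le hf hg hs)
    (setLIntegral_rpow_half_mul_le hf hg hs.compl)

end Affinity

lemma rpow_half_mul_add_compl_le {β : Type*} [MeasurableSpace β] {ν₁ ν₂ : Measure β}
    [IsProbabilityMeasure ν₁] [IsProbabilityMeasure ν₂] {s : Set β} (hs : MeasurableSet s)
    {ε : ℝ} (hε0 : 0 ≤ ε) (hε : ε ≤ 1 / 2) (h₁ : ν₁ s ≤ ENNReal.ofReal ε)
    (h₂ : ν₂ sᶜ ≤ ENNReal.ofReal ε) :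
    (ν₁ s * ν₂ s) ^ (1 / 2 : ℝ) + (ν₁ sᶜ * ν₂ sᶜ) ^ (1 / 2 : ℝ)
      ≤ ENNReal.ofReal (2 * √(ε * (1 - ε))) := by
  have hsqrt : ∀ t : Set β,
      (ν₁ t * ν₂ t) ^ (1 / 2 : ℝ) = ENNReal.ofReal √(ν₁.real t * ν₂.real t) := fun t => by
    rw [Real.sqrt_eq_rpow, ← ENNReal.ofReal_rpow_of_nonneg (by positivity) (by norm_num),
        ENNReal.ofReal_mul measureReal_nonneg, ofReal_measureReal, ofReal_measureReal]
  have hx : ν₁.real s ≤ ε := ENNReal.toReal_le_of_le_ofReal hε0 h₁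
  have hy : ν₂.real sᶜ ≤ ε := ENNReal.toReal_le_of_le_ofReal hε0 h₂
  rw [probReal_compl_eq_one_sub hs] at hy
  rw [hsqrt, hsqrt, ← ENNReal.ofReal_add (by positivity) (by positivity),
    probReal_compl_eq_one_sub hs, probReal_compl_eq_one_sub hs]
  exact ENNReal.ofReal_le_ofReal <| Real.sqrt_mul_add_sqrt_one_sub_mul_one_sub_le hε
    measureReal_nonneg hx (by linarith) measureReal_le_one

section Product

variable {Ω : Type*} [MeasurableSpace Ω] {P : Measure Ω} {f g : Ω → ℝ}

lemma Integrable.sqrt_mul (hf0 : 0 ≤ f) (hg0 : 0 ≤ g) (hf : Integrable f P)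
    (hg : Integrable g P) : Integrable (fun ω => √(f ω * g ω)) P := by
  refine (hf.add hg).mono (Real.continuous_sqrt.comp_aestronglyMeasurable (hf.1.mul hg.1))
    (ae_of_all _ fun ω => ?_)
  have hfω : 0 ≤ f ω := hf0 ω
  have hgω : 0 ≤ g ω := hg0 ω
  rw [Real.norm_of_nonneg (Real.sqrt_nonneg _), Pi.add_apply,
    Real.norm_of_nonneg (add_nonneg hfω hgω)]
  exact Real.sqrt_le_iff.mpr ⟨add_nonneg hfω hgω, by nlinarith⟩

variable [SigmaFinite P]

lemma lintegral_ofReal_fintype_prod_eq_pow {ι : Type*} [Fintype ι] (hf0 : 0 ≤ f)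
    (hf : Integrable f P) :
    ∫⁻ y, ENNReal.ofReal (∏ i, f (y i)) ∂(Measure.pi fun _ : ι => P)
      = ENNReal.ofReal ((∫ ω, f ω ∂P) ^ Fintype.card ι) := by
  rw [← ofReal_integral_eq_lintegral_ofReal (Integrable.fintype_prod fun _ => hf)
    (ae_of_all _ fun y => Finset.prod_nonneg fun i _ => hf0 (y i)),
    integral_fintype_prod_eq_pow]

lemma isProbabilityMeasure_prodDensityMeasure (K : ℕ) (hf0 : 0 ≤ f) (hf1 : ∫ ω, f ω ∂P = 1) :
    IsProbabilityMeasure (prodDensityMeasure P K f) := by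
  have hf : Integrable f P := .of_integral_ne_zero (by simp [hf1])
  constructor
  rw [prodDensityMeasure, withDensity_apply _ .univ, Measure.restrict_univ,
    lintegral_ofReal_fintype_prod_eq_pow hf0 hf, hf1]
  simp

lemma ofReal_integral_sqrt_mul_pow (K : ℕ) (hf0 : 0 ≤ f) (hg0 : 0 ≤ g) (hf : Integrable f P)
    (hg : Integrable g P) :
    ENNReal.ofReal ((∫ ω, √(f ω * g ω) ∂P) ^ K)
      = ∫⁻ y, (ENNReal.ofReal (∏ k, f (y k)) * ENNReal.ofReal (∏ k, g (y k))) ^ (1 / 2 : ℝ)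
          ∂(Measure.pi fun _ : Fin K => P) := by
  have h := lintegral_ofReal_fintype_prod_eq_pow (ι := Fin K) (P := P)
    (fun ω => Real.sqrt_nonneg (f ω * g ω)) (hf.sqrt_mul hf0 hg0 hg)
  rw [Fintype.card_fin] at h
  rw [← h]
  refine lintegral_congr fun y => ?_
  have hF : 0 ≤ ∏ k, f (y k) := Finset.prod_nonneg fun k _ => hf0 (y k)
  have hG : 0 ≤ ∏ k, g (y k) := Finset.prod_nonneg fun k _ => hg0 (y k)
  rw [← ENNReal.ofReal_mul hF, ENNReal.ofReal_rpow_of_nonneg (mul_nonneg hF hG) (by norm_num),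
    ← Real.sqrt_eq_rpow, ← Finset.prod_mul_distrib,
    Real.sqrt_prod _ fun k _ => mul_nonneg (hf0 (y k)) (hg0 (y k))]

end Product

end MeasureTheory

theorem hellinger_bound_of_reliable_estimate_general {Ω : Type*} [MeasurableSpace Ω]
    (P : Measure Ω) [SigmaFinite P]
    (p q : Ω → ℝ)
    (hp0 : ∀ ω, 0 ≤ p ω) (hq0 : ∀ ω, 0 ≤ q ω)
    (hp1 : ∫ ω, p ω ∂P = 1) (hq1 : ∫ ω, q ω ∂P = 1)
    (ε : ℝ) (hε : 0 < ε) (hε2 : ε < 1 / 2)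
    (K : ℕ) (a b : ℝ) (r : ℝ) (hr : r = (b - a) / 2)
    (ghat : (Fin K → Ω) → ℝ) (hghat : Measurable ghat)
    (h1 : prodDensityMeasure P K q {y | r ≤ |ghat y - b|} ≤ ENNReal.ofReal ε)
    (h2 : prodDensityMeasure P K p {y | r ≤ |ghat y - a|} ≤ ENNReal.ofReal ε) :
    (∫ ω, Real.sqrt (p ω * q ω) ∂P) ^ K ≤ 2 * Real.sqrt (ε * (1 - ε)) := by
  have hp : Integrable p P := .of_integral_ne_zero (by simp [hp1])
  have hq : Integrable q P := .of_integral_ne_zero (by simp [hq1])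
  have := isProbabilityMeasure_prodDensityMeasure K hp0 hp1
  have := isProbabilityMeasure_prodDensityMeasure K hq0 hq1
  set S := {y | r ≤ |ghat y - a|}
  have hS : MeasurableSet S := measurableSet_le measurable_const (hghat.sub_const a).abs
  have hqS : prodDensityMeasure P K q Sᶜ ≤ ENNReal.ofReal ε := by
    refine (measure_mono fun y hy => ?_).trans h1
    have hy : |ghat y - a| < r := not_le.mp hy
    show r ≤ |ghat y - b|
    rw [abs_lt] at hy
    exact le_abs.mpr (.inr (by linarith))
  have hF := (Integrable.fintype_prod (ι := Fin K) fun _ => hp).aemeasurable.ennreal_ofReal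
  have hG := (Integrable.fintype_prod (ι := Fin K) fun _ => hq).aemeasurable.ennreal_ofReal
  have hbound : ENNReal.ofReal ((∫ ω, √(p ω * q ω) ∂P) ^ K)
      ≤ ENNReal.ofReal (2 * √(ε * (1 - ε))) := by
    rw [ofReal_integral_sqrt_mul_pow K hp0 hq0 hp hq]
    exact (lintegral_rpow_half_mul_le_add_compl hF hG hS).trans
      (rpow_half_mul_add_compl_le (ν₁ := prodDensityMeasure P K p)
        (ν₂ := prodDensityMeasure P K q) hS hε.le hε2.le h2 hqS)
  exact (ENNReal.ofReal_le_ofReal_iff (by positivity)).mp hbound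

/-- If some Borel estimate `ghat` of a quantity taking value `a` under the
density `p` and value `b` under the density `q` recovers it within accuracy
`r = (b-a)/2` with confidence `1 - ε` from `K̄` i.i.d. observations, then the Hellinger
affinity satisfies `(∫ √(p q) dP)^K̄ ≤ 2√(ε(1-ε))`. -/
theorem hellinger_bound_of_reliable_estimate {Ω : Type*} [MeasurableSpace Ω]
    (P : Measure Ω) [SigmaFinite P]
    (p q : Ω → ℝ) (hpm : Measurable p) (hqm : Measurable q)
    (hp0 : ∀ ω, 0 ≤ p ω) (hq0 : ∀ ω, 0 ≤ q ω)
    (hp1 : ∫ ω, p ω ∂P = 1) (hq1 : ∫ ω, q ω ∂P = 1)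
    (ε : ℝ) (hε : 0 < ε) (hε2 : ε < 1 / 2)
    (K : ℕ) (hK : 0 < K) (a b : ℝ) (hab : a < b) (r : ℝ) (hr : r = (b - a) / 2)
    (ghat : (Fin K → Ω) → ℝ) (hghat : Measurable ghat)
    (h1 : prodDensityMeasure P K q {y | r ≤ |ghat y - b|} ≤ ENNReal.ofReal ε)
    (h2 : prodDensityMeasure P K p {y | r ≤ |ghat y - a|} ≤ ENNReal.ofReal ε) :
    (∫ ω, Real.sqrt (p ω * q ω) ∂P) ^ K ≤ 2 * Real.sqrt (ε * (1 - ε)) :=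
  hellinger_bound_of_reliable_estimate_general P p q hp0 hq0 hp1 hq1 ε hε hε2 K a b r hr ghat hghat
    h1 h2
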